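/- For every natural number n, the game {n·↓ + * | 0} is equal (as a game value) to (n+1)·↓. -/

import Mathlib

universe u

namespace SetTheory

/-- Combinatorial pre-games (removed from Mathlib; restored with the old definition). -/
inductive PGame : Type (u + 1)
  | mk : ∀ α β : Type u, (α → PGame) → (β → PGame) → PGame

namespace PGame

/-- The pre-game with the given lists of left and right options. -/
def ofLists (L R : List PGame.{u}) : PGame.{u} :=
  mk (ULift (Fin L.length)) (ULift (Fin R.length)) (fun i => L.get i.down) fun j => R.get j.down

instance : Zero PGame.{u} :=
  ⟨mk PEmpty PEmpty PEmpty.elim PEmpty.elim⟩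

/-- Disjunctive sum of pre-games. -/
noncomputable def add (x : PGame.{u}) : PGame.{u} → PGame.{u} :=
  PGame.rec (motive := fun _ => PGame.{u} → PGame.{u})
    (fun xl xr _ _ IHxl IHxr y =>
      PGame.rec (motive := fun _ => PGame.{u})
        (fun yl yr yL yR IHyl IHyr =>
          mk (xl ⊕ yl) (xr ⊕ yr) (Sum.elim (fun i => IHxl i (mk yl yr yL yR)) IHyl)
            (Sum.elim (fun i => IHxr i (mk yl yr yL yR)) IHyr)) y) x

noncomputable instance : Add PGame.{u} := ⟨add⟩

/-- The pair (x ≤ y, x ⧏ y), defined by simultaneous recursion. -/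
noncomputable def leLF (x : PGame.{u}) : PGame.{u} → Prop × Prop :=
  PGame.rec (motive := fun _ => PGame.{u} → Prop × Prop)
    (fun xl xr _ _ IHxl IHxr y =>
      PGame.rec (motive := fun _ => Prop × Prop)
        (fun yl yr yL yR IHyl IHyr =>
          ((∀ i, (IHxl i (mk yl yr yL yR)).2) ∧ ∀ j, (IHyr j).2,
           (∃ i, (IHyl i).1) ∨ ∃ j, (IHxr j (mk yl yr yL yR)).1)) y) x

instance : LE PGame.{u} := ⟨fun x y => (leLF x y).1⟩

/-- Equivalence of pre-games: `x ≤ y ∧ y ≤ x`. -/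
def Equiv (x y : PGame.{u}) : Prop := x ≤ y ∧ y ≤ x

instance : HasEquiv PGame.{u} := ⟨Equiv⟩

end PGame

end SetTheory

open SetTheory PGame

/-- star = {0|0} -/
noncomputable def star' : PGame := PGame.ofLists [0] [0]
/-- up = {0|*} -/
noncomputable def up' : PGame := PGame.ofLists [0] [star']
/-- down = {*|0} -/
noncomputable def down' : PGame := PGame.ofLists [star'] [0]

/-- sum of n copies of up -/
noncomputable def nUp : ℕ → PGame
  | 0 => 0
  | n + 1 => nUp n + up'

/-- sum of n copies of down -/
noncomputable def nDown : ℕ → PGame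
  | 0 => 0
  | n + 1 => nDown n + down'

/-- iterated up: up^[1] = ↑, up^[n] = {up^[n-1] | *} -/
noncomputable def upIter : ℕ → PGame
  | 0 => 0
  | 1 => up'
  | n + 2 => PGame.ofLists [upIter (n + 1)] [star']

/-- iterated down: down_[1] = ↓, down_[n] = {* | down_[n-1]} -/
noncomputable def downIter : ℕ → PGame
  | 0 => 0
  | 1 => down'
  | n + 2 => PGame.ofLists [star'] [downIter (n + 1)]


/-! Write `Xₙ = {n·↓ + * | 0}`. The left options of `(n+1)·↓ = n·↓ + ↓` all equal `n·↓ + *` and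
its right options all equal `n·↓`; together with `(n+1)·↓ < 0` this reduces both inequalities
between `Xₙ` and `(n+1)·↓` to `n·↓ ≰ Xₙ`. For `n = 0` the right option `0` of `X₀` refutes
`0 ≤ X₀`. For `n = m+1` it suffices that `Xₘ₊₁ ≤ m·↓ + *`, a left option of `(m+1)·↓`, i.e. that
neither right option `m·↓`, `(m-1)·↓ + *` of `m·↓ + *` is `≤ Xₘ₊₁`. Shrinking the left option gives
`Xₘ₊₁ ≤ Xₘ`, which is `(m+1)·↓` by induction; and `m·↓ ≰ (m+1)·↓` as `↓ < 0`, while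
`(m-1)·↓ + * ≰ (m+1)·↓` as `* ≰ ⇓`, Left having the move `* → 0` against `⇓ ≤ 0`. -/

namespace SetTheory

namespace PGame

def LeftMoves : PGame.{u} → Type u
  | mk l _ _ _ => l

def RightMoves : PGame.{u} → Type u
  | mk _ r _ _ => r

def moveLeft : ∀ g : PGame.{u}, LeftMoves g → PGame.{u}
  | mk _ _ L _ => L

def moveRight : ∀ g : PGame.{u}, RightMoves g → PGame.{u}
  | mk _ _ _ R => R

def LF (x y : PGame.{u}) : Prop := (leLF x y).2

infixl:50 " ⧏ " => SetTheory.PGame.LF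

theorem le_iff_forall_lf {x y : PGame.{u}} :
    x ≤ y ↔ (∀ i, x.moveLeft i ⧏ y) ∧ ∀ j, x ⧏ y.moveRight j := by
  cases x; cases y; exact Iff.rfl

theorem lf_iff_exists_le {x y : PGame.{u}} :
    x ⧏ y ↔ (∃ i, x ≤ y.moveLeft i) ∨ ∃ j, x.moveRight j ≤ y := by
  cases x; cases y; exact Iff.rfl

theorem lf_of_le_moveLeft {x y : PGame.{u}} {i : y.LeftMoves} (h : x ≤ y.moveLeft i) : x ⧏ y :=
  lf_iff_exists_le.2 (Or.inl ⟨i, h⟩)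

theorem lf_of_moveRight_le {x y : PGame.{u}} {j : x.RightMoves} (h : x.moveRight j ≤ y) : x ⧏ y :=
  lf_iff_exists_le.2 (Or.inr ⟨j, h⟩)

theorem _root_.LE.le.moveLeft_lf {x y : PGame.{u}} (h : x ≤ y) (i : x.LeftMoves) :
    x.moveLeft i ⧏ y :=
  (le_iff_forall_lf.1 h).1 i

theorem _root_.LE.le.lf_moveRight {x y : PGame.{u}} (h : x ≤ y) (j : y.RightMoves) :
    x ⧏ y.moveRight j :=
  (le_iff_forall_lf.1 h).2 j

theorem not_le_and_not_lf (x y : PGame.{u}) : (¬ x ≤ y ↔ y ⧏ x) ∧ (¬ x ⧏ y ↔ y ≤ x) := by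
  induction x generalizing y with
  | mk xl xr xL xR IHxl IHxr =>
  induction y with
  | mk yl yr yL yR IHyl IHyr =>
  constructor
  · show ¬ ((∀ i, xL i ⧏ mk yl yr yL yR) ∧ ∀ j, mk xl xr xL xR ⧏ yR j) ↔
      (∃ i, mk yl yr yL yR ≤ xL i) ∨ ∃ j, yR j ≤ mk xl xr xL xR
    rw [not_and_or, not_forall, not_forall]
    exact or_congr (exists_congr fun i => (IHxl i _).2) (exists_congr fun j => (IHyr j).2)
  · show ¬ ((∃ i, mk xl xr xL xR ≤ yL i) ∨ ∃ j, xR j ≤ mk yl yr yL yR) ↔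
      (∀ i, yL i ⧏ mk xl xr xL xR) ∧ ∀ j, mk yl yr yL yR ⧏ xR j
    rw [not_or, not_exists, not_exists]
    exact and_congr (forall_congr' fun i => (IHyl i).1) (forall_congr' fun j => (IHxr j _).1)

theorem not_le {x y : PGame.{u}} : ¬ x ≤ y ↔ y ⧏ x := (not_le_and_not_lf x y).1

theorem not_lf {x y : PGame.{u}} : ¬ x ⧏ y ↔ y ≤ x := (not_le_and_not_lf x y).2

theorem le_trans_aux {x y z : PGame.{u}}
    (h₁ : ∀ i, y ≤ z → z ≤ x.moveLeft i → y ≤ x.moveLeft i)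
    (h₂ : ∀ j, z.moveRight j ≤ x → x ≤ y → z.moveRight j ≤ y) (hxy : x ≤ y) (hyz : y ≤ z) :
    x ≤ z :=
  le_iff_forall_lf.2 ⟨fun i => not_le.1 fun h => not_lf.2 (h₁ i hyz h) (hxy.moveLeft_lf i),
    fun j => not_le.1 fun h => not_lf.2 (h₂ j h hxy) (hyz.lf_moveRight j)⟩

instance : Preorder PGame.{u} where
  le_refl x := by
    induction x with
    | mk xl xr xL xR IHxl IHxr =>
    exact le_iff_forall_lf.2
      ⟨fun i => lf_of_le_moveLeft (i := i) (IHxl i), fun j => lf_of_moveRight_le (j := j) (IHxr j)⟩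
  le_trans x y z := by
    -- the inductive step of each rotation of transitivity uses the other two
    suffices ∀ x y z : PGame.{u},
        (x ≤ y → y ≤ z → x ≤ z) ∧ (y ≤ z → z ≤ x → y ≤ x) ∧ (z ≤ x → x ≤ y → z ≤ y) from
      (this x y z).1
    intro x
    induction x with
    | mk xl xr xL xR IHxl IHxr =>
    intro y
    induction y with
    | mk yl yr yL yR IHyl IHyr =>
    intro z
    induction z with
    | mk zl zr zL zR IHzl IHzr =>
    exact ⟨le_trans_aux (fun i => (IHxl i _ _).2.1) (fun j => (IHzr j).2.2),
      le_trans_aux (fun i => (IHyl i _).2.2) (fun j => (IHxr j _ _).1),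
      le_trans_aux (fun i => (IHzl i).1) (fun j => (IHyr j _).2.1)⟩

theorem lf_irrefl (x : PGame.{u}) : ¬ x ⧏ x := not_lf.2 le_rfl

theorem lf_of_le_of_lf {x y z : PGame.{u}} (h₁ : x ≤ y) (h₂ : y ⧏ z) : x ⧏ z :=
  not_le.1 fun h => not_le.2 h₂ (h.trans h₁)

instance : IsEmpty (LeftMoves (0 : PGame.{u})) := inferInstanceAs (IsEmpty PEmpty)

instance : IsEmpty (RightMoves (0 : PGame.{u})) := inferInstanceAs (IsEmpty PEmpty)

section Singleton

variable {a c x y : PGame.{u}}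

def ofListsSingletonLeftMove : (ofLists [a] [c]).LeftMoves := ⟨0⟩

def ofListsSingletonRightMove : (ofLists [a] [c]).RightMoves := ⟨0⟩

@[simp]
theorem ofLists_singleton_moveLeft (i : (ofLists [a] [c]).LeftMoves) :
    (ofLists [a] [c]).moveLeft i = a := by
  obtain ⟨⟨_ | _, hi⟩⟩ := i
  · rfl
  · simp at hi

@[simp]
theorem ofLists_singleton_moveRight (j : (ofLists [a] [c]).RightMoves) :
    (ofLists [a] [c]).moveRight j = c := by
  obtain ⟨⟨_ | _, hj⟩⟩ := j
  · rfl
  · simp at hj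

theorem ofLists_singleton_le_iff :
    ofLists [a] [c] ≤ y ↔ a ⧏ y ∧ ∀ j, ofLists [a] [c] ⧏ y.moveRight j := by
  rw [le_iff_forall_lf]
  simp only [ofLists_singleton_moveLeft]
  exact ⟨fun h => ⟨h.1 ofListsSingletonLeftMove, h.2⟩, fun h => ⟨fun _ => h.1, h.2⟩⟩

theorem le_ofLists_singleton_iff :
    x ≤ ofLists [a] [c] ↔ (∀ i, x.moveLeft i ⧏ ofLists [a] [c]) ∧ x ⧏ c := by
  rw [le_iff_forall_lf]
  simp only [ofLists_singleton_moveRight]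
  exact ⟨fun h => ⟨h.1, h.2 ofListsSingletonRightMove⟩, fun h => ⟨h.1, fun _ => h.2⟩⟩

theorem lf_ofLists_singleton (h : x ≤ a) : x ⧏ ofLists [a] [c] :=
  lf_of_le_moveLeft (i := ofListsSingletonLeftMove) h

theorem ofLists_singleton_lf (h : c ≤ y) : ofLists [a] [c] ⧏ y :=
  lf_of_moveRight_le (j := ofListsSingletonRightMove) h

theorem ofLists_singleton_le_ofLists_singleton (h : a ≤ x) : ofLists [a] [c] ≤ ofLists [x] [c] :=
  ofLists_singleton_le_iff.2 ⟨lf_ofLists_singleton h, fun _ =>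
    ofLists_singleton_lf (by rw [ofLists_singleton_moveRight])⟩

end Singleton

def toLeftMovesAdd {x y : PGame.{u}} : x.LeftMoves ⊕ y.LeftMoves ≃ (x + y).LeftMoves := by
  cases x; cases y; exact Equiv.refl _

def toRightMovesAdd {x y : PGame.{u}} : x.RightMoves ⊕ y.RightMoves ≃ (x + y).RightMoves := by
  cases x; cases y; exact Equiv.refl _

@[simp]
theorem add_moveLeft_inl {x y : PGame.{u}} (i : x.LeftMoves) :
    (x + y).moveLeft (toLeftMovesAdd (Sum.inl i)) = x.moveLeft i + y := by
  cases x; cases y; rfl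

@[simp]
theorem add_moveLeft_inr {x y : PGame.{u}} (i : y.LeftMoves) :
    (x + y).moveLeft (toLeftMovesAdd (Sum.inr i)) = x + y.moveLeft i := by
  cases x; cases y; rfl

@[simp]
theorem add_moveRight_inl {x y : PGame.{u}} (j : x.RightMoves) :
    (x + y).moveRight (toRightMovesAdd (Sum.inl j)) = x.moveRight j + y := by
  cases x; cases y; rfl

@[simp]
theorem add_moveRight_inr {x y : PGame.{u}} (j : y.RightMoves) :
    (x + y).moveRight (toRightMovesAdd (Sum.inr j)) = x + y.moveRight j := by
  cases x; cases y; rfl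

@[elab_as_elim]
theorem leftMoves_add_cases {x y : PGame.{u}} {P : (x + y).LeftMoves → Prop}
    (k : (x + y).LeftMoves) (hl : ∀ i, P (toLeftMovesAdd (Sum.inl i)))
    (hr : ∀ i, P (toLeftMovesAdd (Sum.inr i))) : P k := by
  rw [← toLeftMovesAdd.apply_symm_apply k]
  cases toLeftMovesAdd.symm k with
  | inl i => exact hl i
  | inr i => exact hr i

@[elab_as_elim]
theorem rightMoves_add_cases {x y : PGame.{u}} {P : (x + y).RightMoves → Prop}
    (k : (x + y).RightMoves) (hl : ∀ j, P (toRightMovesAdd (Sum.inl j)))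
    (hr : ∀ j, P (toRightMovesAdd (Sum.inr j))) : P k := by
  rw [← toRightMovesAdd.apply_symm_apply k]
  cases toRightMovesAdd.symm k with
  | inl j => exact hl j
  | inr j => exact hr j

inductive Relabelling : PGame.{u} → PGame.{u} → Prop
  | mk {x y : PGame.{u}} (L : x.LeftMoves ≃ y.LeftMoves) (R : x.RightMoves ≃ y.RightMoves)
      (hL : ∀ i, Relabelling (x.moveLeft i) (y.moveLeft (L i)))
      (hR : ∀ j, Relabelling (x.moveRight j) (y.moveRight (R j))) : Relabelling x y

theorem Relabelling.equiv {x y : PGame.{u}} (h : Relabelling x y) : x ≈ y := by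
  induction h with
  | @mk x y L R hL hR ihL ihR =>
    constructor
    · refine le_iff_forall_lf.2
        ⟨fun i => lf_of_le_moveLeft (ihL i).1, fun j => lf_of_moveRight_le (j := R.symm j) ?_⟩
      simpa using (ihR (R.symm j)).1
    · refine le_iff_forall_lf.2
        ⟨fun i => lf_of_le_moveLeft (i := L.symm i) ?_, fun j => lf_of_moveRight_le (ihR j).2⟩
      simpa using (ihL (L.symm i)).2

theorem add_comm_relabelling (x y : PGame.{u}) : Relabelling (x + y) (y + x) := by
  induction x generalizing y with
  | mk xl xr xL xR IHxl IHxr =>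
  induction y with
  | mk yl yr yL yR IHyl IHyr =>
  refine Relabelling.mk (Equiv.sumComm xl yl) (Equiv.sumComm xr yr) ?_ ?_
  · rintro (i | i)
    · exact IHxl i _
    · exact IHyl i
  · rintro (j | j)
    · exact IHxr j _
    · exact IHyr j

theorem add_assoc_relabelling (x y z : PGame.{u}) : Relabelling (x + y + z) (x + (y + z)) := by
  induction x generalizing y z with
  | mk xl xr xL xR IHxl IHxr =>
  induction y generalizing z with
  | mk yl yr yL yR IHyl IHyr =>
  induction z with
  | mk zl zr zL zR IHzl IHzr =>
  refine Relabelling.mk (Equiv.sumAssoc xl yl zl) (Equiv.sumAssoc xr yr zr) ?_ ?_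
  · rintro ((i | i) | i)
    · exact IHxl i _ _
    · exact IHyl i _
    · exact IHzl i
  · rintro ((j | j) | j)
    · exact IHxr j _ _
    · exact IHyr j _
    · exact IHzr j

theorem add_zero_relabelling (x : PGame.{u}) : Relabelling (x + 0) x := by
  induction x with
  | mk xl xr xL xR IHxl IHxr =>
  refine Relabelling.mk (Equiv.sumEmpty _ _) (Equiv.sumEmpty _ _) ?_ ?_
  · rintro (i | i)
    · exact IHxl i
    · exact i.elim
  · rintro (j | j)
    · exact IHxr j
    · exact j.elim

theorem add_comm_equiv (x y : PGame.{u}) : x + y ≈ y + x := (add_comm_relabelling x y).equiv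

theorem add_assoc_equiv (x y z : PGame.{u}) : x + y + z ≈ x + (y + z) :=
  (add_assoc_relabelling x y z).equiv

theorem add_zero_equiv (x : PGame.{u}) : x + 0 ≈ x := (add_zero_relabelling x).equiv

theorem zero_add_equiv (x : PGame.{u}) : 0 + x ≈ x :=
  ⟨(add_comm_equiv 0 x).1.trans (add_zero_equiv x).1,
    (add_zero_equiv x).2.trans (add_comm_equiv x 0).1⟩

theorem add_right_mono_aux (x y z : PGame.{u}) :
    (x ≤ y → x + z ≤ y + z) ∧ (x ⧏ y → x + z ⧏ y + z) := by
  induction x generalizing y z with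
  | mk xl xr xL xR IHxl IHxr =>
  induction y generalizing z with
  | mk yl yr yL yR IHyl IHyr =>
  induction z with
  | mk zl zr zL zR IHzl IHzr =>
  constructor
  · intro h
    have h' := le_iff_forall_lf.1 h
    refine le_iff_forall_lf.2 ⟨?_, ?_⟩
    · rintro (i | k)
      · exact (IHxl i _ _).2 (h'.1 i)
      · exact lf_of_le_moveLeft (i := Sum.inr k) ((IHzl k).1 h)
    · rintro (j | k)
      · exact (IHyr j _).2 (h'.2 j)
      · exact lf_of_moveRight_le (j := Sum.inr k) ((IHzr k).1 h)
  · intro h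
    rcases lf_iff_exists_le.1 h with ⟨i, hi⟩ | ⟨j, hj⟩
    · exact lf_of_le_moveLeft (i := Sum.inl i) ((IHyl i _).1 hi)
    · exact lf_of_moveRight_le (j := Sum.inl j) ((IHxr j _ _).1 hj)

theorem add_le_add_right' {x y : PGame.{u}} (h : x ≤ y) (z : PGame.{u}) : x + z ≤ y + z :=
  (add_right_mono_aux x y z).1 h

theorem add_le_add_left' {y z : PGame.{u}} (h : y ≤ z) (x : PGame.{u}) : x + y ≤ x + z :=
  (add_comm_equiv x y).1.trans ((add_le_add_right' h x).trans (add_comm_equiv z x).1)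

theorem add_congr {a₁ a₂ b₁ b₂ : PGame.{u}} (ha : a₁ ≈ a₂) (hb : b₁ ≈ b₂) : a₁ + b₁ ≈ a₂ + b₂ :=
  ⟨(add_le_add_right' ha.1 b₁).trans (add_le_add_left' hb.1 a₂),
    (add_le_add_right' ha.2 b₂).trans (add_le_add_left' hb.2 a₁)⟩

noncomputable def neg (x : PGame.{u}) : PGame.{u} :=
  PGame.rec (motive := fun _ => PGame.{u}) (fun l r _ _ IHL IHR => mk r l IHR IHL) x

noncomputable instance : Neg PGame.{u} := ⟨neg⟩

theorem neg_anti_aux (x y : PGame.{u}) : (x ≤ y → -y ≤ -x) ∧ (x ⧏ y → -y ⧏ -x) := by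
  induction x generalizing y with
  | mk xl xr xL xR IHxl IHxr =>
  induction y with
  | mk yl yr yL yR IHyl IHyr =>
  constructor
  · intro h
    have h' := le_iff_forall_lf.1 h
    exact le_iff_forall_lf.2 ⟨fun j => (IHyr j).2 (h'.2 j), fun i => (IHxl i _).2 (h'.1 i)⟩
  · intro h
    rcases lf_iff_exists_le.1 h with ⟨i, hi⟩ | ⟨j, hj⟩
    · exact lf_of_moveRight_le (j := i) ((IHyl i).1 hi)
    · exact lf_of_le_moveLeft (i := j) ((IHxr j _).1 hj)

theorem neg_le_neg' {x y : PGame.{u}} (h : x ≤ y) : -y ≤ -x := (neg_anti_aux x y).1 h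

theorem neg_congr {x y : PGame.{u}} (h : x ≈ y) : -x ≈ -y := ⟨neg_le_neg' h.2, neg_le_neg' h.1⟩

-- Tweedledum–Tweedledee: each move in one summand is answered by its mirror image in the other.
theorem add_neg_le_zero_and_zero_le (x : PGame.{u}) : x + -x ≤ 0 ∧ 0 ≤ x + -x := by
  induction x with
  | mk xl xr xL xR IHxl IHxr =>
  constructor
  · refine le_iff_forall_lf.2 ⟨?_, fun j => isEmptyElim j⟩
    rintro (i | j)
    · show xL i + -(mk xl xr xL xR) ⧏ 0
      refine lf_of_moveRight_le
        (j := toRightMovesAdd (Sum.inr (show (-(mk xl xr xL xR)).RightMoves from i))) ?_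
      rw [add_moveRight_inr]; exact (IHxl i).1
    · show mk xl xr xL xR + -(xR j) ⧏ 0
      refine lf_of_moveRight_le
        (j := toRightMovesAdd (Sum.inl (show (mk xl xr xL xR).RightMoves from j))) ?_
      rw [add_moveRight_inl]; exact (IHxr j).1
  · refine le_iff_forall_lf.2 ⟨fun i => isEmptyElim i, ?_⟩
    rintro (j | i)
    · show 0 ⧏ xR j + -(mk xl xr xL xR)
      refine lf_of_le_moveLeft
        (i := toLeftMovesAdd (Sum.inr (show (-(mk xl xr xL xR)).LeftMoves from j))) ?_
      rw [add_moveLeft_inr]; exact (IHxr j).2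
    · show 0 ⧏ mk xl xr xL xR + -(xL i)
      refine lf_of_le_moveLeft
        (i := toLeftMovesAdd (Sum.inl (show (mk xl xr xL xR).LeftMoves from i))) ?_
      rw [add_moveLeft_inl]; exact (IHxl i).2

theorem neg_add_equiv (x : PGame.{u}) : -x + x ≈ 0 :=
  ⟨(add_comm_equiv (-x) x).1.trans (add_neg_le_zero_and_zero_le x).1,
    (add_neg_le_zero_and_zero_le x).2.trans (add_comm_equiv (-x) x).2⟩

instance setoid : Setoid PGame.{u} :=
  ⟨(· ≈ ·), ⟨fun _ => ⟨le_rfl, le_rfl⟩, fun h => ⟨h.2, h.1⟩,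
    fun h₁ h₂ => ⟨h₁.1.trans h₂.1, h₂.2.trans h₁.2⟩⟩⟩

end PGame

abbrev Game : Type (u + 1) := Quotient PGame.setoid.{u}

namespace Game

instance : LE Game.{u} :=
  ⟨Quotient.lift₂ (fun x y : PGame.{u} => x ≤ y) fun _ _ _ _ ha hb =>
    propext ⟨fun h => (ha.2.trans h).trans hb.1, fun h => (ha.1.trans h).trans hb.2⟩⟩

-- Declared directly: through `PartialOrder.toPreorder` Mathlib's generic order on `Quotient`
-- would take precedence.
instance : Preorder Game.{u} where
  lt a b := a ≤ b ∧ ¬ b ≤ a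
  le_refl a := Quotient.inductionOn a fun x => le_refl (α := PGame) x
  le_trans a b c := Quotient.inductionOn₃ a b c fun _ _ _ => le_trans (α := PGame)

instance : PartialOrder Game.{u} where
  le_antisymm a b := Quotient.inductionOn₂ a b fun _ _ h₁ h₂ => Quotient.sound ⟨h₁, h₂⟩

instance : Zero Game.{u} := ⟨⟦0⟧⟩

noncomputable instance : Add Game.{u} :=
  ⟨Quotient.lift₂ (fun x y : PGame.{u} => (⟦x + y⟧ : Game.{u}))
    fun _ _ _ _ ha hb => Quotient.sound (PGame.add_congr ha hb)⟩

noncomputable instance : Neg Game.{u} :=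
  ⟨Quotient.lift (fun x : PGame.{u} => (⟦-x⟧ : Game.{u}))
    fun _ _ h => Quotient.sound (PGame.neg_congr h)⟩

noncomputable instance : AddCommGroup Game.{u} where
  add_assoc a b c := Quotient.inductionOn₃ a b c fun x y z =>
    Quotient.sound (PGame.add_assoc_equiv x y z)
  zero_add a := Quotient.inductionOn a fun x => Quotient.sound (PGame.zero_add_equiv x)
  add_zero a := Quotient.inductionOn a fun x => Quotient.sound (PGame.add_zero_equiv x)
  neg_add_cancel a := Quotient.inductionOn a fun x => Quotient.sound (PGame.neg_add_equiv x)
  add_comm a b := Quotient.inductionOn₂ a b fun x y => Quotient.sound (PGame.add_comm_equiv x y)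
  nsmul := nsmulRec
  zsmul := zsmulRec

instance : IsOrderedAddMonoid Game.{u} where
  add_le_add_left a b h c := by
    revert h
    exact Quotient.inductionOn₃ a b c fun x y z h => PGame.add_le_add_right' h z

end Game

namespace PGame

theorem le_iff_game_le {x y : PGame.{u}} : x ≤ y ↔ (⟦x⟧ : Game.{u}) ≤ ⟦y⟧ := Iff.rfl

theorem lf_iff_not_game_le {x y : PGame.{u}} : x ⧏ y ↔ ¬ (⟦y⟧ : Game.{u}) ≤ ⟦x⟧ := not_le.symm

@[simp]
theorem quot_add (x y : PGame.{u}) : (⟦x + y⟧ : Game.{u}) = ⟦x⟧ + ⟦y⟧ := rfl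

@[simp]
theorem quot_zero : (⟦0⟧ : Game.{u}) = 0 := rfl

end PGame

end SetTheory

theorem star_moveRight (j : star'.RightMoves) : star'.moveRight j = 0 :=
  ofLists_singleton_moveRight j

theorem down_moveLeft (i : down'.LeftMoves) : down'.moveLeft i = star' :=
  ofLists_singleton_moveLeft i

theorem down_moveRight (j : down'.RightMoves) : down'.moveRight j = 0 :=
  ofLists_singleton_moveRight j

theorem not_zero_le_star : ¬ (0 : PGame) ≤ star' := fun h =>
  lf_irrefl 0 (le_ofLists_singleton_iff.1 h).2

theorem down_le_zero : down' ≤ (0 : PGame) :=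
  ofLists_singleton_le_iff.2 ⟨not_le.1 not_zero_le_star, isEmptyElim⟩

theorem not_zero_le_down : ¬ (0 : PGame) ≤ down' := fun h =>
  lf_irrefl 0 (le_ofLists_singleton_iff.1 h).2

theorem not_down_le_star : ¬ down' ≤ star' := fun h =>
  lf_irrefl star' (ofLists_singleton_le_iff.1 h).1

theorem game_down_lt_zero : (⟦down'⟧ : Game) < 0 :=
  lt_of_le_not_ge down_le_zero not_zero_le_down

theorem game_not_star_le_of_nonpos {g : Game} (hg : g ≤ 0) : ¬ ⟦star'⟧ ≤ g := by
  induction g using Quotient.inductionOn with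
  | h g => exact fun h => not_lf.2 hg (ofLists_singleton_le_iff.1 h).1

theorem quot_nDown (n : ℕ) : (⟦nDown n⟧ : Game) = n • ⟦down'⟧ := by
  induction n with
  | zero => simp [nDown]
  | succ n ih => rw [nDown, quot_add, ih, succ_nsmul]

theorem quot_nDown_succ_moveLeft (n : ℕ) (i : (nDown (n + 1)).LeftMoves) :
    (⟦(nDown (n + 1)).moveLeft i⟧ : Game) = n • ⟦down'⟧ + ⟦star'⟧ := by
  change (⟦(nDown n + down').moveLeft i⟧ : Game) = _
  refine leftMoves_add_cases (x := nDown n) (y := down') i (fun i => ?_) (fun k => ?_)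
  · cases n with
    | zero => exact isEmptyElim (α := (0 : PGame).LeftMoves) i
    | succ m =>
      rw [add_moveLeft_inl, quot_add, quot_nDown_succ_moveLeft m i, succ_nsmul]
      abel
  · rw [add_moveLeft_inr, down_moveLeft, quot_add, quot_nDown]

theorem quot_nDown_succ_moveRight (n : ℕ) (j : (nDown (n + 1)).RightMoves) :
    (⟦(nDown (n + 1)).moveRight j⟧ : Game) = n • ⟦down'⟧ := by
  change (⟦(nDown n + down').moveRight j⟧ : Game) = _
  refine rightMoves_add_cases (x := nDown n) (y := down') j (fun j => ?_) (fun k => ?_)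
  · cases n with
    | zero => exact isEmptyElim (α := (0 : PGame).RightMoves) j
    | succ m => rw [add_moveRight_inl, quot_add, quot_nDown_succ_moveRight m j, succ_nsmul]
  · rw [add_moveRight_inr, down_moveRight, quot_add, quot_nDown, quot_zero, add_zero]

theorem nDown_succ_le_nDown (n : ℕ) : nDown (n + 1) ≤ nDown n :=
  (add_le_add_left' down_le_zero _).trans (add_zero_equiv _).1

theorem nDown_succ_lf_moveRight (m : ℕ) (j : (nDown m + star').RightMoves) :
    nDown (m + 1) ⧏ (nDown m + star').moveRight j := by
  refine rightMoves_add_cases j (fun j => ?_) (fun k => ?_)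
  · cases m with
    | zero => exact isEmptyElim (α := (0 : PGame).RightMoves) j
    | succ k =>
      rw [add_moveRight_inl, lf_iff_not_game_le, quot_add, quot_nDown_succ_moveRight, quot_nDown,
        succ_nsmul, succ_nsmul, add_assoc, add_le_add_iff_left, ← two_nsmul]
      exact game_not_star_le_of_nonpos (nsmul_nonpos game_down_lt_zero.le 2)
  · rw [add_moveRight_inr, star_moveRight, lf_iff_not_game_le, quot_add, quot_zero, add_zero,
      quot_nDown, quot_nDown, succ_nsmul, le_add_iff_nonneg_right]
    exact not_zero_le_down

theorem ofLists_le_nDown_succ (n : ℕ) (h : ¬ nDown.{u} n ≤ ofLists [nDown n + star'] [0]) :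
    ofLists [nDown.{u} n + star'] [0] ≤ nDown (n + 1) := by
  refine ofLists_singleton_le_iff.2 ⟨?_, fun j => not_le.1 fun hj => h (le_trans ?_ hj)⟩
  · rw [lf_iff_not_game_le, quot_add, quot_nDown, quot_nDown, succ_nsmul, add_le_add_iff_left]
    exact not_down_le_star
  · rw [le_iff_game_le, quot_nDown_succ_moveRight, quot_nDown]

theorem nDown_succ_le_ofLists (n : ℕ) : nDown (n + 1) ≤ ofLists [nDown n + star'] [0] := by
  refine le_ofLists_singleton_iff.2 ⟨fun i => lf_ofLists_singleton ?_, not_le.1 fun h => ?_⟩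
  · rw [le_iff_game_le, quot_nDown_succ_moveLeft, quot_add, quot_nDown]
  · rw [le_iff_game_le, quot_zero, quot_nDown] at h
    exact (nsmul_neg game_down_lt_zero n.succ_ne_zero).not_ge h

theorem not_nDown_zero_le_ofLists : ¬ nDown 0 ≤ ofLists [nDown 0 + star'] [0] := fun h =>
  lf_irrefl 0 (le_ofLists_singleton_iff.1 h).2

theorem not_nDown_succ_le_ofLists (m : ℕ)
    (ih : ofLists [nDown.{u} m + star'] [0] ≈ nDown (m + 1)) :
    ¬ nDown.{u} (m + 1) ≤ ofLists [nDown (m + 1) + star'] [0] := by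
  intro h
  have hX : ofLists [nDown (m + 1) + star'] [0] ≤ nDown m + star' := by
    refine ofLists_singleton_le_iff.2 ⟨?_, fun j => lf_of_le_of_lf ?_ (nDown_succ_lf_moveRight m j)⟩
    · rw [lf_iff_not_game_le, quot_add, quot_add, quot_nDown, quot_nDown, succ_nsmul,
        add_le_add_iff_right, le_add_iff_nonneg_right]
      exact not_zero_le_down
    · exact (ofLists_singleton_le_ofLists_singleton
        (add_le_add_right' (nDown_succ_le_nDown m) _)).trans ih.1
  -- unfolds `↓`, so that its left move to `*` can be named
  have h' : nDown m + ofLists [star'] [0] ≤ ofLists [nDown (m + 1) + star'] [0] := h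
  have := h'.moveLeft_lf (toLeftMovesAdd (Sum.inr ofListsSingletonLeftMove))
  rw [add_moveLeft_inr, ofLists_singleton_moveLeft] at this
  exact not_lf.2 hX this

theorem stmt3 (n : ℕ) :
    PGame.ofLists [nDown n + star'] [0] ≈ nDown (n + 1) := by
  induction n with
  | zero => exact ⟨ofLists_le_nDown_succ 0 not_nDown_zero_le_ofLists, nDown_succ_le_ofLists 0⟩
  | succ m ih =>
    exact ⟨ofLists_le_nDown_succ (m + 1) (not_nDown_succ_le_ofLists m ih),
      nDown_succ_le_ofLists (m + 1)⟩
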